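/- arXiv:1410.4488 — 2 statements merged into one kernel-verified Lean document; each statement's English description precedes it below -/
import Mathlib

section
/- A connected 3-state invertible reversible non-bireversible Mealy automaton generates a free semigroup: if A = (Q, Σ, δ, ρ) is a connected invertible reversible Mealy automaton with |Q| = 3 that is not bireversible, then the map u ↦ ρ_u is injective on nonempty words, i.e., for all u, v ∈ Q⁺, ρ_u = ρ_v implies u = v. -/
/-!
Mealy automata: common definitions.

A Mealy automaton on stateset `Q` and alphabet `Γ` is given by transition
functions `δ : Γ → Q → Q` (for each input letter) and output functions
`ρ : Q → Γ → Γ` (for each state); it has a transition `x —i|j→ y` exactly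
when `δ i x = y` and `ρ x i = j`.
-/

/-- Extended output function `ρ_x : Γ* → Γ*` of a single state. -/
def rhoStar {Q Γ : Type*} (δ : Γ → Q → Q) (ρ : Q → Γ → Γ) : Q → List Γ → List Γ
  | _, [] => []
  | x, i :: s => ρ x i :: rhoStar δ ρ (δ i x) s

/-- `ρ_u : Γ* → Γ*` for a word `u = x₁⋯x_n` of states: `ρ_u = ρ_{x_n} ∘ ⋯ ∘ ρ_{x₁}`. -/
def rhoWord {Q Γ : Type*} (δ : Γ → Q → Q) (ρ : Q → Γ → Γ) : List Q → List Γ → List Γ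
  | [], s => s
  | x :: u, s => rhoWord δ ρ u (rhoStar δ ρ x s)

/-- `ρ_u : Γ → Γ` on single letters (the output function of the power automaton). -/
def rhoLetter {Q Γ : Type*} (ρ : Q → Γ → Γ) : List Q → Γ → Γ
  | [], i => i
  | x :: u, i => rhoLetter ρ u (ρ x i)

/-- Extended transition function `δ_i : Q* → Q*` (the transition function of powers). -/
def deltaStar {Q Γ : Type*} (δ : Γ → Q → Q) (ρ : Q → Γ → Γ) : Γ → List Q → List Q
  | _, [] => []
  | i, x :: u => δ i x :: deltaStar δ ρ (ρ x i) u

/-- Sequential application `δ_s = δ_{s_n} ∘ ⋯ ∘ δ_{s₁}` of the letters of a word `s`. -/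
def applyWord {S Γ : Type*} (d : Γ → S → S) : List Γ → S → S
  | [], x => x
  | i :: s, x => applyWord d s (d i x)

/-- The orbit `{δ_s(x) : s ∈ Γ*}` of a state: for reversible automata this is
exactly the (strongly) connected component of `x`. -/
def orbitOf {S Γ : Type*} (d : Γ → S → S) (x : S) : Set S :=
  {y | ∃ s : List Γ, applyWord d s x = y}

/-- An automaton is invertible when every output function is a permutation. -/
def MInvertible {Q Γ : Type*} (ρ : Q → Γ → Γ) : Prop := ∀ x, Function.Bijective (ρ x)

/-- An automaton is reversible when every transition function is a permutation. -/
def MReversible {Q Γ : Type*} (δ : Γ → Q → Q) : Prop := ∀ i, Function.Bijective (δ i)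

/-- Coreversibility: `δ_i(y) = δ_{i'}(z)` and `ρ_y(i) = ρ_z(i')` imply `y = z`. -/
def MCoreversible {Q Γ : Type*} (δ : Γ → Q → Q) (ρ : Q → Γ → Γ) : Prop :=
  ∀ y z : Q, ∀ i i' : Γ, δ i y = δ i' z → ρ y i = ρ z i' → y = z

/-- Bireversible: invertible, reversible and coreversible. -/
def MBireversible {Q Γ : Type*} (δ : Γ → Q → Q) (ρ : Q → Γ → Γ) : Prop :=
  MInvertible ρ ∧ MReversible δ ∧ MCoreversible δ ρ

/-- Connectedness: every state is reachable from every state. -/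
def MConnected {Q Γ : Type*} (δ : Γ → Q → Q) : Prop :=
  ∀ x y : Q, ∃ s : List Γ, applyWord δ s x = y

/-- Invertibility of a component `C` (as an automaton with stateset `C`). -/
def CompInvertible {S Γ : Type*} (r : S → Γ → Γ) (C : Set S) : Prop :=
  ∀ x ∈ C, Function.Bijective (r x)

/-- Reversibility of a component `C`: each transition function permutes `C`. -/
def CompReversible {S Γ : Type*} (d : Γ → S → S) (C : Set S) : Prop :=
  ∀ i : Γ, Set.BijOn (d i) C C

/-- Coreversibility of a component `C` (as an automaton with stateset `C`). -/
def CompCoreversible {S Γ : Type*} (d : Γ → S → S) (r : S → Γ → Γ) (C : Set S) : Prop :=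
  ∀ y ∈ C, ∀ z ∈ C, ∀ i i' : Γ, d i y = d i' z → r y i = r z i' → y = z

/-- Bireversibility of a component `C` (as an automaton with stateset `C`). -/
def CompBireversible {S Γ : Type*} (d : Γ → S → S) (r : S → Γ → Γ) (C : Set S) : Prop :=
  CompInvertible r C ∧ CompReversible d C ∧ CompCoreversible d r C

/-- Transition functions of the product `A × B` of two Mealy automata. -/
def prodD {Q Q' Γ : Type*} (δ : Γ → Q → Q) (ρ : Q → Γ → Γ) (δ' : Γ → Q' → Q') :
    Γ → Q × Q' → Q × Q' :=
  fun i p => (δ i p.1, δ' (ρ p.1 i) p.2)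

/-- Output functions of the product `A × B` of two Mealy automata. -/
def prodR {Q Q' Γ : Type*} (ρ : Q → Γ → Γ) (ρ' : Q' → Γ → Γ) : Q × Q' → Γ → Γ :=
  fun p i => ρ' p.2 (ρ p.1 i)

/-- `u^n`: the `n`-fold concatenation of a word with itself. -/
def wordPow {Q : Type*} (u : List Q) : ℕ → List Q
  | 0 => []
  | n + 1 => u ++ wordPow u n


/-!
Since the automaton is not coreversible, there are states `y ≠ z` and letters `i, i'` with
`δ_i y = δ_{i'} z` and `ρ_y i = ρ_z i'`.

Take distinct words `u, v` of the same length `n + 1` with `ρ_u = ρ_v`, where `n` is minimal.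
The pairs of last letters of such words form an irreflexive relation on `Q` that is closed under
the synchronised transitions `(w, w') ↦ (δ_k w, δ_{k'} w')` with `ρ_w k = ρ_{w'} k'`. It therefore
avoids `(y, z)` and `(z, y)`, so if `Q = {y, z, e}` every related pair has exactly one entry `e`,
and by connectedness `y` and `z` are both related to `e`. Counting letters then shows that no
transition leads from `y` or `z` to `e`, contradicting connectedness.

Words of different lengths reduce to the case of equal lengths: `ρ_u = ρ_v` gives `ρ_{uv} = ρ_{vu}`,
hence `uv = vu`, so `v = uw` with `ρ_w = id`; but then `ρ_{xw} = ρ_{wx}` for a state `x` other than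
the first letter of `w`.
-/

open Finset

section Words

variable {Q Γ : Type*} (δ : Γ → Q → Q) (ρ : Q → Γ → Γ)

theorem rhoWord_append (u v : List Q) (s : List Γ) :
    rhoWord δ ρ (u ++ v) s = rhoWord δ ρ v (rhoWord δ ρ u s) := by
  induction u generalizing s with
  | nil => rfl
  | cons x u ih => exact ih _

theorem rhoWord_apply_cons (u : List Q) (i : Γ) (s : List Γ) :
    rhoWord δ ρ u (i :: s) = rhoLetter ρ u i :: rhoWord δ ρ (deltaStar δ ρ i u) s := by
  induction u generalizing i s with
  | nil => rfl
  | cons x u ih => exact ih _ _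

theorem rhoLetter_append_singleton (u : List Q) (x : Q) (i : Γ) :
    rhoLetter ρ (u ++ [x]) i = ρ x (rhoLetter ρ u i) := by
  induction u generalizing i with
  | nil => rfl
  | cons y u ih => exact ih _

theorem deltaStar_append_singleton (i : Γ) (u : List Q) (x : Q) :
    deltaStar δ ρ i (u ++ [x]) = deltaStar δ ρ i u ++ [δ (rhoLetter ρ u i) x] := by
  induction u generalizing i with
  | nil => rfl
  | cons y u ih => simp only [List.cons_append, deltaStar, ih, rhoLetter]

theorem length_deltaStar (i : Γ) (u : List Q) : (deltaStar δ ρ i u).length = u.length := by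
  induction u generalizing i with
  | nil => rfl
  | cons x u ih => simp only [deltaStar, List.length_cons, ih]

theorem deltaStar_injective (hRev : MReversible δ) (i : Γ) :
    Function.Injective (deltaStar δ ρ i) := by
  intro u v h
  induction u generalizing i v with
  | nil => cases v <;> simp_all [deltaStar]
  | cons x u ih =>
    cases v with
    | nil => simp [deltaStar] at h
    | cons x' v =>
      obtain ⟨hx, hu⟩ := List.cons.inj h
      obtain rfl := (hRev i).1 hx
      rw [ih _ hu]

variable {δ ρ}

theorem rhoLetter_bijective (hInv : MInvertible ρ) (u : List Q) :
    Function.Bijective (rhoLetter ρ u) := by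
  induction u with
  | nil => exact Function.bijective_id
  | cons x u ih => exact ih.comp (hInv x)

theorem rhoStar_injective (hInv : MInvertible ρ) (x : Q) : Function.Injective (rhoStar δ ρ x) := by
  intro s t h
  induction s generalizing x t with
  | nil => cases t <;> simp_all [rhoStar]
  | cons i s ih =>
    cases t with
    | nil => simp [rhoStar] at h
    | cons j t =>
      obtain ⟨hi, hs⟩ := List.cons.inj h
      obtain rfl := (hInv x).1 hi
      rw [ih _ hs]

theorem rhoStar_surjective (hInv : MInvertible ρ) (x : Q) :
    Function.Surjective (rhoStar δ ρ x) := by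
  intro t
  induction t generalizing x with
  | nil => exact ⟨[], rfl⟩
  | cons j t ih =>
    obtain ⟨i, rfl⟩ := (hInv x).2 j
    obtain ⟨s, hs⟩ := ih (δ i x)
    exact ⟨i :: s, by rw [rhoStar, hs]⟩

theorem rhoWord_surjective (hInv : MInvertible ρ) (u : List Q) :
    Function.Surjective (rhoWord δ ρ u) := by
  induction u with
  | nil => exact Function.surjective_id
  | cons x u ih => exact ih.comp (rhoStar_surjective hInv x)

theorem rhoLetter_eq_of_rhoWord_eq {u v : List Q} (h : rhoWord δ ρ u = rhoWord δ ρ v) (i : Γ) :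
    rhoLetter ρ u i = rhoLetter ρ v i := by
  have := congrFun h [i]
  rw [rhoWord_apply_cons, rhoWord_apply_cons] at this
  exact (List.cons.inj this).1

theorem rhoWord_deltaStar_eq_of_rhoWord_eq {u v : List Q} (h : rhoWord δ ρ u = rhoWord δ ρ v)
    (i : Γ) : rhoWord δ ρ (deltaStar δ ρ i u) = rhoWord δ ρ (deltaStar δ ρ i v) := by
  funext s
  have := congrFun h (i :: s)
  rw [rhoWord_apply_cons, rhoWord_apply_cons] at this
  exact (List.cons.inj this).2

theorem applyWord_mem {S : Type*} {d : Γ → S → S} {A : Set S} (hA : ∀ i, Set.MapsTo (d i) A A)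
    (s : List Γ) {x : S} (hx : x ∈ A) : applyWord d s x ∈ A := by
  induction s generalizing x with
  | nil => exact hx
  | cons i s ih => exact ih (hA i hx)

end Words

section Twins

variable {Q Γ : Type*} {δ : Γ → Q → Q} {ρ : Q → Γ → Γ}

def PairClosed (δ : Γ → Q → Q) (ρ : Q → Γ → Γ) (R : Q → Q → Prop) : Prop :=
  ∀ ⦃w w' : Q⦄ ⦃k k' : Γ⦄, R w w' → ρ w k = ρ w' k' → R (δ k w) (δ k' w')

def TwinTail (δ : Γ → Q → Q) (ρ : Q → Γ → Γ) (n : ℕ) (w w' : Q) : Prop :=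
  ∃ c c' : List Q, c.length = n ∧ c'.length = n ∧ c ++ [w] ≠ c' ++ [w'] ∧
    rhoWord δ ρ (c ++ [w]) = rhoWord δ ρ (c' ++ [w'])

theorem pairClosed_twinTail (hInv : MInvertible ρ) (hRev : MReversible δ) (n : ℕ) :
    PairClosed δ ρ (TwinTail δ ρ n) := by
  rintro w w' k k' ⟨c, c', hc, hc', hne, htwin⟩ hout
  obtain ⟨i, hi⟩ := (rhoLetter_bijective hInv c).2 k
  have hi' : rhoLetter ρ c' i = k' := by
    apply (hInv w').1
    have := rhoLetter_eq_of_rhoWord_eq htwin i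
    rwa [rhoLetter_append_singleton, rhoLetter_append_singleton, hi, hout, eq_comm] at this
  have hδ (u : List Q) (x : Q) (j : Γ) (hj : rhoLetter ρ u i = j) :
      deltaStar δ ρ i (u ++ [x]) = deltaStar δ ρ i u ++ [δ j x] := by
    rw [deltaStar_append_singleton, hj]
  refine ⟨deltaStar δ ρ i c, deltaStar δ ρ i c', by rw [length_deltaStar, hc],
    by rw [length_deltaStar, hc'], ?_, ?_⟩
  · rw [← hδ c w k hi, ← hδ c' w' k' hi']
    exact fun h => hne (deltaStar_injective δ ρ hRev i h)
  · rw [← hδ c w k hi, ← hδ c' w' k' hi']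
    exact rhoWord_deltaStar_eq_of_rhoWord_eq htwin i

theorem twinTail_irrefl (hInv : MInvertible ρ) {n : ℕ}
    (ih : ∀ c c' : List Q, c.length = n → c'.length = n → rhoWord δ ρ c = rhoWord δ ρ c' → c = c')
    (w : Q) : ¬ TwinTail δ ρ n w w := by
  rintro ⟨c, c', hc, hc', hne, htwin⟩
  refine hne (congrArg (· ++ [w]) (ih c c' hc hc' (funext fun s => ?_)))
  apply rhoStar_injective hInv w
  simpa only [rhoWord_append, rhoWord] using congrFun htwin s

namespace PairClosed

variable {R : Q → Q → Prop}

theorem not_rel_of_merge (hR : PairClosed δ ρ R) (hirr : ∀ w, ¬ R w w) {y z : Q} {i i' : Γ}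
    (hδ : δ i y = δ i' z) (hρ : ρ y i = ρ z i') : ¬ R y z := fun h =>
  hirr _ (hδ ▸ hR h hρ)

theorem exists_rel_applyWord (hR : PairClosed δ ρ R) (hInv : MInvertible ρ) (s : List Γ)
    {w w' : Q} (h : R w w') : ∃ b, R (applyWord δ s w) b := by
  induction s generalizing w w' with
  | nil => exact ⟨w', h⟩
  | cons k s ih =>
    obtain ⟨k', hk'⟩ := (hInv w').2 (ρ w k)
    exact ih (hR h hk'.symm)

end PairClosed

end Twins

theorem card_filter_eq_of_bijective {Γ : Type*} [Fintype Γ] {f g : Γ → Γ}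
    (hf : f.Bijective) (hg : g.Bijective) {p q : Γ → Prop} [DecidablePred p] [DecidablePred q]
    (h : ∀ k k', f k = g k' → (p k ↔ q k')) : #{k | p k} = #{k | q k} := by
  let π : Γ ≃ Γ := (Equiv.ofBijective f hf).trans (Equiv.ofBijective g hg).symm
  refine card_equiv π fun k => ?_
  simpa only [mem_filter, mem_univ, true_and] using
    h k (π k) (Equiv.ofBijective_apply_symm_apply g hg (f k)).symm

theorem exists_ne_ne_of_card_eq_three {Q : Type*} [Fintype Q] (hcard : Fintype.card Q = 3)
    {y z : Q} (hyz : y ≠ z) : ∃ e, e ≠ y ∧ e ≠ z ∧ ∀ x, x = y ∨ x = z ∨ x = e := by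
  classical
  obtain ⟨e, he⟩ := card_eq_one.mp <| by
    rw [card_compl ({y, z} : Finset Q), card_pair hyz, hcard]
  have hmem (x : Q) : x = e ↔ x ≠ y ∧ x ≠ z := by
    rw [← mem_singleton, ← he]
    simp only [mem_compl, mem_insert, mem_singleton, not_or]
  refine ⟨e, ((hmem e).1 rfl).1, ((hmem e).1 rfl).2, fun x => ?_⟩
  by_cases hx : x = y ∨ x = z
  · tauto
  · exact Or.inr (Or.inr ((hmem x).2 (not_or.mp hx)))

theorem delta_ne_of_output_exchange {Q Γ : Type*} [Fintype Γ] {δ : Γ → Q → Q}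
    {ρ : Q → Γ → Γ} (hInv : MInvertible ρ) (hRev : MReversible δ) {y z e : Q} (hyz : y ≠ z)
    (hQ : ∀ x, x = y ∨ x = z ∨ x = e)
    (hy : ∀ k k', ρ y k = ρ e k' → (δ k y = e ↔ δ k' e ≠ e))
    (hz : ∀ k k', ρ z k = ρ e k' → (δ k z = e ↔ δ k' e ≠ e)) :
    (∀ k, δ k y ≠ e) ∧ ∀ k, δ k z ≠ e := by
  classical
  have hmoved : #{k | δ k e ≠ e} = #{k | δ k y = e} + #{k | δ k z = e} := by
    rw [← card_union_of_disjoint, ← filter_or]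
    · congr 1
      refine filter_congr fun k _ => ?_
      obtain ⟨x, hx⟩ := (hRev k).2 e
      have hpre (a : Q) : δ k a = e ↔ a = x := by rw [← hx, (hRev k).1.eq_iff]
      rw [Ne, hpre, hpre, hpre]
      rcases hQ x with rfl | rfl | rfl <;> grind
    · exact disjoint_filter.2 fun k _ hky hkz => hyz ((hRev k).1 (hky.trans hkz.symm))
  have hcy := card_filter_eq_of_bijective (hInv y) (hInv e) hy
  have hcz := card_filter_eq_of_bijective (hInv z) (hInv e) hz
  have hy0 : #{k | δ k y = e} = 0 := by omega
  have hz0 : #{k | δ k z = e} = 0 := by omega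
  simp only [card_eq_zero, filter_eq_empty_iff, mem_univ, true_implies] at hy0 hz0
  exact ⟨hy0, hz0⟩

theorem PairClosed.not_rel_of_card_eq_three {Q Γ : Type*} [Fintype Q] [Fintype Γ]
    {δ : Γ → Q → Q} {ρ : Q → Γ → Γ} (hcard : Fintype.card Q = 3) (hConn : MConnected δ)
    (hInv : MInvertible ρ) (hRev : MReversible δ) {y z : Q} {i i' : Γ} (hyz : y ≠ z)
    (hδ : δ i y = δ i' z) (hρ : ρ y i = ρ z i') {R : Q → Q → Prop} (hR : PairClosed δ ρ R)
    (hirr : ∀ w, ¬ R w w) (w w' : Q) : ¬ R w w' := by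
  intro hww'
  obtain ⟨e, hey, hez, hQ⟩ := exists_ne_ne_of_card_eq_three hcard hyz
  have hyz' := hR.not_rel_of_merge hirr hδ hρ
  have hzy' := hR.not_rel_of_merge hirr hδ.symm hρ.symm
  have hone (a b : Q) (hab : R a b) : a = e ↔ b ≠ e := by
    rcases hQ a with rfl | rfl | rfl <;> rcases hQ b with rfl | rfl | rfl <;> grind
  have hrel_e (x : Q) (hx : x ≠ e) : R x e := by
    obtain ⟨s, hs⟩ := hConn w x
    obtain ⟨b, hb⟩ := hR.exists_rel_applyWord hInv s hww'
    rw [hs] at hb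
    rwa [of_not_not ((hone x b hb).not.mp hx)] at hb
  have hexchange (x : Q) (hx : x ≠ e) (k k' : Γ) (hk : ρ x k = ρ e k') :
      δ k x = e ↔ δ k' e ≠ e :=
    hone _ _ (hR (hrel_e x hx) hk)
  obtain ⟨hy, hz⟩ := delta_ne_of_output_exchange hInv hRev hyz hQ
    (hexchange y hey.symm) (hexchange z hez.symm)
  have hstay (k : Γ) : Set.MapsTo (δ k) {e}ᶜ {e}ᶜ := fun x hx => by
    rcases hQ x with rfl | rfl | rfl
    exacts [hy k, hz k, absurd rfl hx]
  obtain ⟨s, hs⟩ := hConn y e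
  exact applyWord_mem hstay s hey.symm hs

theorem eq_of_rhoWord_eq_of_length_eq {Q Γ : Type*} [Fintype Q] [Fintype Γ]
    {δ : Γ → Q → Q} {ρ : Q → Γ → Γ} (hcard : Fintype.card Q = 3) (hConn : MConnected δ)
    (hInv : MInvertible ρ) (hRev : MReversible δ) {y z : Q} {i i' : Γ} (hyz : y ≠ z)
    (hδ : δ i y = δ i' z) (hρ : ρ y i = ρ z i') {u v : List Q} (hlen : u.length = v.length)
    (h : rhoWord δ ρ u = rhoWord δ ρ v) : u = v := by
  induction hn : u.length generalizing u v with
  | zero => rw [List.length_eq_zero_iff.mp hn, List.length_eq_zero_iff.mp (hlen.symm.trans hn)]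
  | succ n ih =>
    by_contra hne
    obtain ⟨c, w, rfl⟩ := (List.eq_nil_or_concat' u).resolve_left (by rintro rfl; simp at hn)
    obtain ⟨c', w', rfl⟩ := (List.eq_nil_or_concat' v).resolve_left (by rintro rfl; simp at hlen)
    simp only [List.length_append, List.length_singleton, Nat.add_right_cancel_iff] at hlen hn
    refine (pairClosed_twinTail hInv hRev n).not_rel_of_card_eq_three hcard hConn hInv hRev hyz
      hδ hρ (twinTail_irrefl hInv fun c c' hc hc' hcc => ih (hc.trans hc'.symm) hcc hc) w w'
      ⟨c, c', hn, hlen ▸ hn, hne, h⟩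

theorem eq_nil_of_rhoWord_eq_id {Q Γ : Type*} [Nontrivial Q] {δ : Γ → Q → Q} {ρ : Q → Γ → Γ}
    (hlen : ∀ u v : List Q, u.length = v.length → rhoWord δ ρ u = rhoWord δ ρ v → u = v)
    {w : List Q} (hw : rhoWord δ ρ w = id) : w = [] := by
  obtain _ | ⟨x, w'⟩ := w
  · rfl
  obtain ⟨x', hx'⟩ := exists_ne x
  have hcomm : [x'] ++ x :: w' = x :: w' ++ [x'] := by
    refine hlen _ _ (by simp [Nat.add_comm]) (funext fun s => ?_)
    rw [rhoWord_append, rhoWord_append, hw]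
    rfl
  exact absurd (List.cons.inj hcomm).1 hx'

theorem rhoWord_injective_of_length_eq {Q Γ : Type*} [Nontrivial Q] {δ : Γ → Q → Q}
    {ρ : Q → Γ → Γ} (hInv : MInvertible ρ)
    (hlen : ∀ u v : List Q, u.length = v.length → rhoWord δ ρ u = rhoWord δ ρ v → u = v) :
    Function.Injective (rhoWord δ ρ) := by
  suffices hlt : ∀ u v : List Q, u.length < v.length → rhoWord δ ρ u ≠ rhoWord δ ρ v by
    intro u v h
    rcases lt_trichotomy u.length v.length with huv | huv | huv
    exacts [absurd h (hlt u v huv), hlen u v huv h, absurd h.symm (hlt v u huv)]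
  intro u v huv h
  have hcomm : u ++ v = v ++ u := by
    refine hlen _ _ (by simp [Nat.add_comm]) (funext fun s => ?_)
    rw [rhoWord_append, rhoWord_append, h]
  obtain ⟨w, rfl⟩ : u <+: v :=
    List.prefix_of_prefix_length_le (hcomm ▸ List.prefix_append u v) (List.prefix_append v u)
      huv.le
  have hw : rhoWord δ ρ w = id := funext fun t => by
    obtain ⟨s, rfl⟩ := rhoWord_surjective (δ := δ) hInv u t
    rw [← rhoWord_append, ← h]
    rfl
  simp [eq_nil_of_rhoWord_eq_id hlen hw] at huv

theorem free_semigroup_of_connected_three_state_general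
    {Q Γ : Type*} [Fintype Q] [Fintype Γ]
    (δ : Γ → Q → Q) (ρ : Q → Γ → Γ)
    (hcard : Fintype.card Q = 3)
    (hConn : MConnected δ) (hInv : MInvertible ρ) (hRev : MReversible δ)
    (hNotBir : ¬ MBireversible δ ρ) :
    ∀ u v : List Q, u ≠ [] → v ≠ [] → rhoWord δ ρ u = rhoWord δ ρ v → u = v := by
  have hNotCorev : ¬ MCoreversible δ ρ := fun hCorev => hNotBir ⟨hInv, hRev, hCorev⟩
  simp only [MCoreversible, not_forall] at hNotCorev
  obtain ⟨y, z, i, i', hδ, hρ, hyz⟩ := hNotCorev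
  have : Nontrivial Q := Fintype.one_lt_card_iff_nontrivial.mp (by omega)
  intro u v _ _ h
  exact rhoWord_injective_of_length_eq hInv
    (fun _ _ hlen => eq_of_rhoWord_eq_of_length_eq hcard hConn hInv hRev hyz hδ hρ hlen) h

/-- A connected 3-state invertible reversible
non-bireversible Mealy automaton generates a free semigroup: the map
`u ↦ ρ_u` is injective on nonempty words. -/
theorem free_semigroup_of_connected_three_state
    {Q Γ : Type*} [Fintype Q] [Fintype Γ] [Nonempty Q] [Nonempty Γ]
    (δ : Γ → Q → Q) (ρ : Q → Γ → Γ)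
    (hcard : Fintype.card Q = 3)
    (hConn : MConnected δ) (hInv : MInvertible ρ) (hRev : MReversible δ)
    (hNotBir : ¬ MBireversible δ ρ) :
    ∀ u v : List Q, u ≠ [] → v ≠ [] → rhoWord δ ρ u = rhoWord δ ρ v → u = v :=
  free_semigroup_of_connected_three_state_general δ ρ hcard hConn hInv hRev hNotBir
end

section
/- Let A = (Q, Σ, δ, ρ) and B = (Q′, Σ, δ′, ρ′) be reversible Mealy automata on the same alphabet. If A is connected and non-coreversible, then every connected component of the product A × B, viewed as a Mealy automaton, is reversible and non-coreversible. -/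
/-!
On a finite stateset, an orbit of injective transition functions is permuted by each of them,
so every component of `A × B` is reversible, hence also closed under preimages. For
non-coreversibility, take a witness `δ_i(y) = δ_{i'}(z)`, `ρ_y(i) = ρ_z(i')`, `y ≠ z` in `A`.
Connectedness of `A` puts some `(y, b)` in the component; `(z, b)` is sent by `i'` to the image
of `(y, b)` under `i`, with the same output, so it lies in the component as well and the same
witness refutes coreversibility there.
-/

section Orbit

variable {S Γ : Type*} (d : Γ → S → S)

theorem applyWord_append (s t : List Γ) (x : S) :
    applyWord d (s ++ t) x = applyWord d t (applyWord d s x) := by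
  induction s generalizing x with
  | nil => rfl
  | cons i s ih => exact ih (d i x)

theorem map_mem_orbitOf {p x : S} (hx : x ∈ orbitOf d p) (i : Γ) : d i x ∈ orbitOf d p := by
  obtain ⟨s, rfl⟩ := hx
  exact ⟨s ++ [i], applyWord_append d s [i] p⟩

theorem compReversible_orbitOf [Finite S] (hinj : ∀ i, Function.Injective (d i)) (p : S) :
    CompReversible d (orbitOf d p) := fun i =>
  (Set.Finite.injOn_iff_bijOn_of_mapsTo (Set.toFinite _)
    (fun _ hx => map_mem_orbitOf d hx i)).mp (hinj i).injOn

theorem CompReversible.mem_of_map_mem {d : Γ → S → S} {C : Set S} (hC : CompReversible d C)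
    {i : Γ} (hinj : Function.Injective (d i)) {x : S} (hx : d i x ∈ C) : x ∈ C := by
  obtain ⟨u, huC, hu⟩ := (hC i).surjOn hx
  rwa [← hinj hu]

end Orbit

section Product

variable {Q Q' Γ : Type*} (δ : Γ → Q → Q) (ρ : Q → Γ → Γ) (δ' : Γ → Q' → Q') (ρ' : Q' → Γ → Γ)

theorem prodD_injective (hRevA : MReversible δ) (hRevB : MReversible δ') (i : Γ) :
    Function.Injective (prodD δ ρ δ' i) := by
  rintro ⟨x, w⟩ ⟨x', w'⟩ h
  obtain ⟨hx, hw⟩ := Prod.mk.inj h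
  obtain rfl := (hRevA i).injective hx
  obtain rfl := (hRevB _).injective hw
  rfl

theorem fst_applyWord_prodD (s : List Γ) (p : Q × Q') :
    (applyWord (prodD δ ρ δ') s p).1 = applyWord δ s p.1 := by
  induction s generalizing p with
  | nil => rfl
  | cons i s ih => exact ih _

theorem exists_mk_mem_orbitOf_prodD (hConnA : MConnected δ) (p : Q × Q') (y : Q) :
    ∃ b : Q', (y, b) ∈ orbitOf (prodD δ ρ δ') p := by
  obtain ⟨s, hs⟩ := hConnA p.1 y
  refine ⟨(applyWord (prodD δ ρ δ') s p).2, s, Prod.ext ?_ rfl⟩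
  rw [fst_applyWord_prodD, hs]

theorem not_compCoreversible_orbitOf_prodD [Finite Q] [Finite Q']
    (hRevA : MReversible δ) (hRevB : MReversible δ') (hConnA : MConnected δ)
    (hNotCorA : ¬ MCoreversible δ ρ) (p : Q × Q') :
    ¬ CompCoreversible (prodD δ ρ δ') (prodR ρ ρ') (orbitOf (prodD δ ρ δ') p) := by
  simp only [MCoreversible, not_forall] at hNotCorA
  obtain ⟨y, z, i, i', hδ, hρ, hne⟩ := hNotCorA
  obtain ⟨b, hyb⟩ := exists_mk_mem_orbitOf_prodD δ ρ δ' hConnA p y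
  have hsame : prodD δ ρ δ' i' (z, b) = prodD δ ρ δ' i (y, b) := by
    simp only [prodD, hδ, hρ]
  have hzb : (z, b) ∈ orbitOf (prodD δ ρ δ') p :=
    (compReversible_orbitOf _ (prodD_injective δ ρ δ' hRevA hRevB) p).mem_of_map_mem
      (prodD_injective δ ρ δ' hRevA hRevB i') (hsame ▸ map_mem_orbitOf _ hyb i)
  intro hcor
  have hyz : ((y, b) : Q × Q') = (z, b) :=
    hcor _ hyb _ hzb i i' hsame.symm (by simp only [prodR, hρ])
  exact hne (congrArg Prod.fst hyz)

end Product

theorem product_component_reversible_noncoreversible_general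
    {Q Q' Γ : Type*} [Fintype Q] [Fintype Q']
    (δ : Γ → Q → Q) (ρ : Q → Γ → Γ) (δ' : Γ → Q' → Q') (ρ' : Q' → Γ → Γ)
    (hRevA : MReversible δ) (hRevB : MReversible δ')
    (hConnA : MConnected δ) (hNotCorA : ¬ MCoreversible δ ρ) :
    ∀ p : Q × Q',
      CompReversible (prodD δ ρ δ') (orbitOf (prodD δ ρ δ') p) ∧
      ¬ CompCoreversible (prodD δ ρ δ') (prodR ρ ρ') (orbitOf (prodD δ ρ δ') p) := fun p =>
  ⟨compReversible_orbitOf _ (prodD_injective δ ρ δ' hRevA hRevB) p,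
    not_compCoreversible_orbitOf_prodD δ ρ δ' ρ' hRevA hRevB hConnA hNotCorA p⟩

/-- If `A` and `B` are reversible Mealy automata on the same
alphabet and `A` is connected and non-coreversible, then every connected
component of `A × B` is reversible and non-coreversible. -/
theorem product_component_reversible_noncoreversible
    {Q Q' Γ : Type*} [Fintype Q] [Fintype Q'] [Fintype Γ]
    [Nonempty Q] [Nonempty Q'] [Nonempty Γ]
    (δ : Γ → Q → Q) (ρ : Q → Γ → Γ) (δ' : Γ → Q' → Q') (ρ' : Q' → Γ → Γ)
    (hRevA : MReversible δ) (hRevB : MReversible δ')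
    (hConnA : MConnected δ) (hNotCorA : ¬ MCoreversible δ ρ) :
    ∀ p : Q × Q',
      CompReversible (prodD δ ρ δ') (orbitOf (prodD δ ρ δ') p) ∧
      ¬ CompCoreversible (prodD δ ρ δ') (prodR ρ ρ') (orbitOf (prodD δ ρ δ') p) :=
  product_component_reversible_noncoreversible_general δ ρ δ' ρ' hRevA hRevB hConnA hNotCorA
end
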